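/- Let ρ₀ ∈ L²(𝕋²) and let F_M² be the two-dimensional Fejér kernel with ‖F_M²‖_{L¹(𝕋²)} = 1 and F_M² ≥ 0. Let N ≥ M, Δx = 1/N, and define the grid samples ρ_{i,j} = (F_M² ∗ ρ₀)(i·Δx, j·Δx). Then Σ_{(i,j)∈(ℤ/Nℤ)²} (Δx)² |ρ_{i,j}|² ≤ ‖ρ₀‖²_{L²(𝕋²)}. -/

import Mathlib

open scoped Real
open MeasureTheory

/-- Real form of the Fejér kernel:
`F_M(z) = (1/M) ∑_{ℓ=0}^{M-1} ∑_{|j| ≤ ℓ} cos(2π j z)`. -/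
noncomputable def fejerR (M : ℕ) (z : ℝ) : ℝ :=
  (1 / (M : ℝ)) * ∑ ℓ ∈ Finset.range M, ∑ j ∈ Finset.Icc (-(ℓ : ℤ)) (ℓ : ℤ),
    Real.cos (2 * π * j * z)

lemma sum_Icc_cos (ℓ : ℕ) (z : ℝ) :
    ∑ j ∈ Finset.Icc (-(ℓ : ℤ)) (ℓ : ℤ), Real.cos (2 * π * j * z)
      = 1 + 2 * ∑ k ∈ Finset.range ℓ, Real.cos (2 * π * (k + 1) * z) := by
  induction ℓ with
  | zero => simp
  | succ n ih =>
    have hset : Finset.Icc (-((n:ℤ)+1)) ((n:ℤ)+1)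
        = insert (-((n:ℤ)+1)) (insert ((n:ℤ)+1) (Finset.Icc (-(n:ℤ)) (n:ℤ))) := by
      ext x
      simp only [Finset.mem_Icc, Finset.mem_insert]
      omega
    have h1 : (-((n:ℤ)+1)) ∉ insert ((n:ℤ)+1) (Finset.Icc (-(n:ℤ)) (n:ℤ)) := by
      simp only [Finset.mem_insert, Finset.mem_Icc]; omega
    have h2 : ((n:ℤ)+1) ∉ Finset.Icc (-(n:ℤ)) (n:ℤ) := by
      simp only [Finset.mem_Icc]; omega
    rw [show ((n+1 : ℕ) : ℤ) = (n:ℤ)+1 by push_cast; ring, hset,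
        Finset.sum_insert h1, Finset.sum_insert h2, ih, Finset.sum_range_succ]
    push_cast
    rw [show (2 * π * (-((n:ℝ)+1)) * z) = -(2 * π * ((n:ℝ)+1) * z) by ring, Real.cos_neg]
    ring

lemma fejer_sq (M : ℕ) (z : ℝ) :
    ∑ ℓ ∈ Finset.range M, ∑ j ∈ Finset.Icc (-(ℓ : ℤ)) (ℓ : ℤ), Real.cos (2 * π * j * z)
      = (∑ k ∈ Finset.range M, Real.cos (2 * π * k * z)) ^ 2
        + (∑ k ∈ Finset.range M, Real.sin (2 * π * k * z)) ^ 2 := by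
  induction M with
  | zero => simp
  | succ n ih =>
    rw [Finset.sum_range_succ, ih, sum_Icc_cos]
    rw [Finset.sum_range_succ (fun k => Real.cos (2 * π * k * z)),
        Finset.sum_range_succ (fun k => Real.sin (2 * π * k * z))]
    have key : ∑ k ∈ Finset.range n, Real.cos (2 * π * (k + 1) * z)
        = ∑ k ∈ Finset.range n,
            (Real.cos (2 * π * n * z) * Real.cos (2 * π * k * z)
              + Real.sin (2 * π * n * z) * Real.sin (2 * π * k * z)) := by
      rw [← Finset.sum_range_reflect (fun k => Real.cos (2 * π * (k + 1) * z)) n]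
      refine Finset.sum_congr rfl fun k hk => ?_
      have hk' : k < n := Finset.mem_range.1 hk
      rw [← Real.cos_sub]
      congr 1
      have : ((n - 1 - k : ℕ) : ℝ) = (n : ℝ) - 1 - k := by
        have : k + 1 ≤ n := hk'
        push_cast [Nat.cast_sub (by omega : k ≤ n - 1), Nat.cast_sub (by omega : 1 ≤ n)]
        ring
      rw [this]; ring
    rw [key, Finset.mul_sum, ← Real.sin_sq_add_cos_sq (2 * π * n * z)]
    have h2 : ∑ i ∈ Finset.range n, 2 *
        (Real.cos (2 * π * n * z) * Real.cos (2 * π * i * z)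
          + Real.sin (2 * π * n * z) * Real.sin (2 * π * i * z))
        = 2 * Real.cos (2 * π * n * z) * ∑ k ∈ Finset.range n, Real.cos (2 * π * k * z)
          + 2 * Real.sin (2 * π * n * z) * ∑ k ∈ Finset.range n, Real.sin (2 * π * k * z) := by
      simp only [mul_add, Finset.sum_add_distrib, Finset.mul_sum]
      congr 1 <;> exact Finset.sum_congr rfl fun k _ => by ring
    rw [h2]
    ring

lemma fejer_nonneg (M : ℕ) (z : ℝ) : 0 ≤ fejerR M z := by
  unfold fejerR
  apply mul_nonneg (by positivity)
  rw [fejer_sq]; positivity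

lemma fejer_le (M : ℕ) (z : ℝ) : fejerR M z ≤ M := by
  unfold fejerR
  rcases Nat.eq_zero_or_pos M with h | h
  · simp [h]
  have hb : ∑ ℓ ∈ Finset.range M, ∑ j ∈ Finset.Icc (-(ℓ : ℤ)) (ℓ : ℤ),
      Real.cos (2 * π * j * z) ≤ (M : ℝ) * M := by
    calc ∑ ℓ ∈ Finset.range M, ∑ j ∈ Finset.Icc (-(ℓ : ℤ)) (ℓ : ℤ), Real.cos (2 * π * j * z)
        ≤ ∑ ℓ ∈ Finset.range M, ((2 * ℓ + 1 : ℕ) : ℝ) := by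
          apply Finset.sum_le_sum
          intro ℓ _
          calc ∑ j ∈ Finset.Icc (-(ℓ : ℤ)) (ℓ : ℤ), Real.cos (2 * π * j * z)
              ≤ ∑ j ∈ Finset.Icc (-(ℓ : ℤ)) (ℓ : ℤ), 1 :=
                Finset.sum_le_sum fun j _ => Real.cos_le_one _
            _ = ((2 * ℓ + 1 : ℕ) : ℝ) := by
                rw [Finset.sum_const, nsmul_eq_mul, mul_one, Int.card_Icc,
                  show ((ℓ:ℤ) + 1 - -ℓ).toNat = 2*ℓ+1 by omega]
      _ ≤ (M : ℝ) * M := by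
          have : ∀ m, ∑ ℓ ∈ Finset.range m, (2 * ℓ + 1) = m * m := by
            intro m
            induction m with
            | zero => simp
            | succ n ih => rw [Finset.sum_range_succ, ih]; ring
          have := this M
          rw [← Nat.cast_sum]
          rw [this]
          push_cast; ring_nf; exact le_refl _
  calc (1 / (M : ℝ)) * ∑ ℓ ∈ Finset.range M, ∑ j ∈ Finset.Icc (-(ℓ : ℤ)) (ℓ : ℤ),
        Real.cos (2 * π * j * z) ≤ (1 / (M : ℝ)) * ((M:ℝ) * M) := by
        apply mul_le_mul_of_nonneg_left hb (by positivity)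
    _ = M := by field_simp

lemma fejer_continuous (M : ℕ) : Continuous (fejerR M) := by
  unfold fejerR
  exact continuous_const.mul (continuous_finset_sum _ fun ℓ _ =>
    continuous_finset_sum _ fun j _ => (Real.continuous_cos.comp (by continuity)))

open Complex in
lemma sum_cos_grid (N : ℕ) (j : ℤ) (hj : j ≠ 0) (hjN : j.natAbs < N) (y : ℝ) :
    ∑ i ∈ Finset.range N, Real.cos (2 * π * j * ((i : ℝ) / N - y)) = 0 := by
  have hN : (N : ℝ) ≠ 0 := Nat.cast_ne_zero.mpr (by omega)
  have hNC : (N : ℂ) ≠ 0 := Nat.cast_ne_zero.mpr (by omega)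
  set w : ℂ := Complex.exp (2 * π * j / N * I) with hw
  have hwpow : ∀ i : ℕ, w ^ i = Complex.exp ((i : ℂ) * (2 * π * j / N) * I) := by
    intro i
    rw [hw, ← Complex.exp_nat_mul]
    ring_nf
  have hwN : w ^ N = 1 := by
    rw [hwpow, show ((N:ℂ)) * (2 * π * j / N) * I = j * (2 * π * I) by field_simp,
      Complex.exp_int_mul_two_pi_mul_I]
  have hw1 : w ≠ 1 := by
    intro h
    rw [hw, Complex.exp_eq_one_iff] at h
    obtain ⟨n, hn⟩ := h
    have hπ : (π : ℂ) ≠ 0 := by exact_mod_cast Real.pi_ne_zero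
    have : (j : ℂ) = n * N := by
      field_simp [Complex.I_ne_zero] at hn
      have h2 : (2 * (π:ℂ) * I) * (j:ℂ) = (2 * (π:ℂ) * I) * ((n:ℂ) * N) := by
        linear_combination (2 * (π:ℂ) * I) * hn
      exact mul_left_cancel₀
        (mul_ne_zero (mul_ne_zero two_ne_zero hπ) I_ne_zero) h2
    have : j = n * N := by exact_mod_cast this
    rcases eq_or_ne n 0 with h0 | h0
    · simp [h0] at this; exact hj this
    · have : N ≤ j.natAbs := by
        rw [this]
        calc N = 1 * N := (one_mul N).symm
          _ ≤ n.natAbs * N := by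
            apply Nat.mul_le_mul_right
            omega
          _ = (n * N).natAbs := by rw [Int.natAbs_mul]; simp
      omega
  have hsum : ∑ i ∈ Finset.range N, w ^ i = 0 := by
    rw [geom_sum_eq hw1, hwN]
    simp
  have key : ∑ i ∈ Finset.range N, Complex.exp ((2 * π * j * ((i : ℝ) / N - y) : ℝ) * I)
      = Complex.exp ((-(2 * π * j * y) : ℝ) * I) * ∑ i ∈ Finset.range N, w ^ i := by
    rw [Finset.mul_sum]
    refine Finset.sum_congr rfl fun i _ => ?_
    rw [hwpow, ← Complex.exp_add]
    congr 1
    push_cast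
    field_simp
    ring
  calc ∑ i ∈ Finset.range N, Real.cos (2 * π * j * ((i : ℝ) / N - y))
      = (∑ i ∈ Finset.range N, Complex.exp ((2 * π * j * ((i : ℝ) / N - y) : ℝ) * I)).re := by
        rw [Complex.re_sum]
        exact Finset.sum_congr rfl fun i _ => (Complex.exp_ofReal_mul_I_re _).symm
    _ = 0 := by rw [key, hsum]; simp

lemma sum_fejer_grid (M N : ℕ) (hM : 1 ≤ M) (hMN : M ≤ N) (y : ℝ) :
    ∑ i ∈ Finset.range N, fejerR M ((i : ℝ) / N - y) = N := by
  unfold fejerR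
  rw [← Finset.mul_sum, Finset.sum_comm]
  have inner : ∀ ℓ ∈ Finset.range M,
      ∑ i ∈ Finset.range N, ∑ j ∈ Finset.Icc (-(ℓ : ℤ)) (ℓ : ℤ),
        Real.cos (2 * π * j * ((i : ℝ) / N - y)) = N := by
    intro ℓ hℓ
    rw [Finset.sum_comm]
    have hzero : ∀ j ∈ Finset.Icc (-(ℓ : ℤ)) (ℓ : ℤ), j ≠ 0 →
        ∑ i ∈ Finset.range N, Real.cos (2 * π * j * ((i : ℝ) / N - y)) = 0 := by
      intro j hjmem hj
      apply sum_cos_grid N j hj _ y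
      have := Finset.mem_Icc.1 hjmem
      have hℓ' := Finset.mem_range.1 hℓ
      omega
    rw [Finset.sum_eq_single_of_mem (0 : ℤ) (by simp)
      (fun j hjm hj => hzero j hjm hj)]
    simp
  rw [Finset.sum_congr rfl inner, Finset.sum_const, Finset.card_range]
  have hMR : (M : ℝ) ≠ 0 := Nat.cast_ne_zero.mpr (by omega)
  field_simp
  rw [nsmul_eq_mul]

lemma integral_cos_shift (j : ℤ) (hj : j ≠ 0) (x : ℝ) :
    ∫ y in Set.Icc (0:ℝ) 1, Real.cos (2 * π * j * (x - y)) = 0 := by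
  have h01 : (0:ℝ) ≤ 1 := by norm_num
  rw [MeasureTheory.integral_Icc_eq_integral_Ioc,
    ← intervalIntegral.integral_of_le h01]
  have h1 : (∫ y in (0:ℝ)..1, Real.cos (2 * π * j * (x - y)))
      = ∫ t in (x - 1)..(x - 0), Real.cos (2 * π * j * t) :=
    intervalIntegral.integral_comp_sub_left (fun t => Real.cos (2 * π * j * t)) x
  rw [h1]
  have hjR : (j:ℝ) ≠ 0 := Int.cast_ne_zero.mpr hj
  have hc : (2 * π * (j:ℝ)) ≠ 0 := by
    have := Real.pi_ne_zero
    simp [hjR, this]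
  have h2 : (∫ t in (x - 1)..(x - 0), Real.cos (2 * π * (j:ℝ) * t))
      = (2 * π * (j:ℝ))⁻¹ • ∫ u in (2 * π * j * (x-1))..(2 * π * j * (x - 0)), Real.cos u :=
    intervalIntegral.integral_comp_mul_left (fun u => Real.cos u) hc
  rw [h2, integral_cos]
  have : Real.sin (2 * π * j * (x - 1)) = Real.sin (2 * π * j * (x - 0)) := by
    rw [show 2 * π * (j:ℝ) * (x - 1) = 2 * π * j * (x - 0) - j * (2 * π) by ring]
    rw [Real.sin_sub, Real.cos_int_mul_two_pi,
      show ((j:ℝ) * (2 * π)) = (2*j : ℤ) * π by push_cast; ring, Real.sin_int_mul_pi]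
    ring
  rw [this]
  simp

lemma integral_fejer_shift (M : ℕ) (hM : 1 ≤ M) (x : ℝ) :
    ∫ y in Set.Icc (0:ℝ) 1, fejerR M (x - y) = 1 := by
  unfold fejerR
  rw [MeasureTheory.integral_const_mul]
  have hcont : ∀ (j : ℤ), Continuous fun y : ℝ => Real.cos (2 * π * j * (x - y)) := by
    intro j; exact Real.continuous_cos.comp (by continuity)
  have hint : ∀ (j : ℤ), IntegrableOn (fun y : ℝ => Real.cos (2 * π * j * (x - y)))
      (Set.Icc (0:ℝ) 1) := fun j =>
    ((hcont j).continuousOn).integrableOn_compact isCompact_Icc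
  rw [MeasureTheory.integral_finset_sum _ (fun ℓ _ =>
    MeasureTheory.integrable_finset_sum _ (fun j _ => hint j))]
  have inner : ∀ ℓ ∈ Finset.range M,
      (∫ y in Set.Icc (0:ℝ) 1, ∑ j ∈ Finset.Icc (-(ℓ : ℤ)) (ℓ : ℤ),
        Real.cos (2 * π * j * (x - y))) = 1 := by
    intro ℓ _
    rw [MeasureTheory.integral_finset_sum _ (fun j _ => hint j)]
    rw [Finset.sum_eq_single_of_mem (0 : ℤ) (by simp)
      (fun j _ hj => integral_cos_shift j hj x)]
    simp [Real.volume_Icc]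
  rw [Finset.sum_congr rfl inner, Finset.sum_const, Finset.card_range]
  have hMR : (M : ℝ) ≠ 0 := Nat.cast_ne_zero.mpr (by omega)
  field_simp
  rw [nsmul_eq_mul, mul_one]

lemma integral_W_eq_one (M : ℕ) (hM : 1 ≤ M) (x₁ x₂ : ℝ) :
    ∫ y in Set.Icc (0:ℝ) 1 ×ˢ Set.Icc (0:ℝ) 1,
      fejerR M (x₁ - y.1) * fejerR M (x₂ - y.2) = 1 := by
  rw [MeasureTheory.Measure.volume_eq_prod,
    MeasureTheory.setIntegral_prod_mul (f := fun t => fejerR M (x₁ - t))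
      (g := fun t => fejerR M (x₂ - t)) _ _,
    integral_fejer_shift M hM, integral_fejer_shift M hM, one_mul]

lemma cs_point (M : ℕ) (hM : 1 ≤ M) (ρ₀ : ℝ × ℝ → ℝ) (hmeas : Measurable ρ₀)
    (hint : IntegrableOn (fun y => (ρ₀ y) ^ 2) (Set.Icc (0 : ℝ) 1 ×ˢ Set.Icc (0 : ℝ) 1))
    (x₁ x₂ : ℝ) :
    (∫ y in Set.Icc (0 : ℝ) 1 ×ˢ Set.Icc (0 : ℝ) 1,
        fejerR M (x₁ - y.1) * fejerR M (x₂ - y.2) * ρ₀ y) ^ 2 ≤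
      ∫ y in Set.Icc (0 : ℝ) 1 ×ˢ Set.Icc (0 : ℝ) 1,
        fejerR M (x₁ - y.1) * fejerR M (x₂ - y.2) * (ρ₀ y) ^ 2 := by
  set S := Set.Icc (0 : ℝ) 1 ×ˢ Set.Icc (0 : ℝ) 1 with hS
  have hSm : MeasurableSet S := measurableSet_Icc.prod measurableSet_Icc
  have hScpt : IsCompact S := isCompact_Icc.prod isCompact_Icc
  set W : ℝ × ℝ → ℝ := fun y => fejerR M (x₁ - y.1) * fejerR M (x₂ - y.2) with hW
  have hWcont : Continuous W := by
    apply Continuous.mul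
    · exact (fejer_continuous M).comp (by continuity)
    · exact (fejer_continuous M).comp (by continuity)
  have hWnn : ∀ y, 0 ≤ W y := fun y => mul_nonneg (fejer_nonneg _ _) (fejer_nonneg _ _)
  have hWbd : ∀ y, ‖W y‖ ≤ (M : ℝ) * M := by
    intro y
    rw [Real.norm_eq_abs, abs_of_nonneg (hWnn y)]
    exact mul_le_mul (fejer_le _ _) (fejer_le _ _) (fejer_nonneg _ _) (Nat.cast_nonneg _)
  have hWint : IntegrableOn W S := hWcont.continuousOn.integrableOn_compact hScpt
  have hρint : IntegrableOn ρ₀ S := by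
    have hconst : IntegrableOn (fun _ : ℝ × ℝ => (1:ℝ)) S :=
      integrableOn_const hScpt.measure_lt_top.ne
    refine Integrable.mono (hconst.add hint) hmeas.aestronglyMeasurable.restrict ?_
    filter_upwards with y
    simp only [Real.norm_eq_abs, Pi.add_apply]
    rw [abs_of_nonneg (by positivity : (0:ℝ) ≤ 1 + ρ₀ y ^ 2)]
    nlinarith [sq_nonneg (|ρ₀ y| - 1), sq_abs (ρ₀ y)]
  have hWρ2 : IntegrableOn (fun y => W y * (ρ₀ y) ^ 2) S :=
    hint.bdd_mul hWcont.aestronglyMeasurable.restrict (c := (M:ℝ)*M) (Filter.Eventually.of_forall fun y => hWbd y)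
  have hWρ : IntegrableOn (fun y => W y * ρ₀ y) S :=
    hρint.bdd_mul hWcont.aestronglyMeasurable.restrict (c := (M:ℝ)*M) (Filter.Eventually.of_forall fun y => hWbd y)
  have hW1 : ∫ y in S, W y = 1 := integral_W_eq_one M hM x₁ x₂
  set c : ℝ := ∫ y in S, W y * ρ₀ y with hc
  have key : 0 ≤ ∫ y in S, W y * (ρ₀ y - c) ^ 2 :=
    setIntegral_nonneg hSm fun y _ => mul_nonneg (hWnn y) (sq_nonneg _)
  have expand : (∫ y in S, W y * (ρ₀ y - c) ^ 2)
      = (∫ y in S, W y * (ρ₀ y) ^ 2) - c ^ 2 := by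
    have hfun : (fun y => W y * (ρ₀ y - c) ^ 2)
        = fun y => (W y * (ρ₀ y) ^ 2 - (2 * c) * (W y * ρ₀ y)) + c ^ 2 * W y := by
      funext y; ring
    have hsub : IntegrableOn (fun y => W y * ρ₀ y ^ 2 - 2 * c * (W y * ρ₀ y)) S :=
      hWρ2.sub (hWρ.const_mul (2*c))
    rw [hfun, MeasureTheory.integral_add
        (f := fun y => W y * ρ₀ y ^ 2 - 2 * c * (W y * ρ₀ y))
        (g := fun y => c ^ 2 * W y) hsub (hWint.const_mul (c ^ 2)),
      MeasureTheory.integral_sub (f := fun y => W y * ρ₀ y ^ 2)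
        (g := fun y => 2 * c * (W y * ρ₀ y)) hWρ2 (hWρ.const_mul (2*c)),
      integral_const_mul, integral_const_mul, hW1, ← hc]
    ring
  have : c ^ 2 ≤ ∫ y in S, W y * (ρ₀ y) ^ 2 := by
    rw [expand] at key; linarith
  calc (∫ y in S, fejerR M (x₁ - y.1) * fejerR M (x₂ - y.2) * ρ₀ y) ^ 2
      = c ^ 2 := by rw [hc]
    _ ≤ ∫ y in S, W y * (ρ₀ y) ^ 2 := this
    _ = ∫ y in S, fejerR M (x₁ - y.1) * fejerR M (x₂ - y.2) * (ρ₀ y) ^ 2 := rfl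

/-- Stability in discrete `L²` of the Fejér regularization of the initial data:
for `N ≥ M`, the grid samples `ρ_{i,j} = (F_M² ∗ ρ₀)(i Δx, j Δx)` satisfy
`∑ (Δx)² |ρ_{i,j}|² ≤ ‖ρ₀‖²_{L²(𝕋²)}`. -/
theorem stmt_15 (M N : ℕ) (hM : 1 ≤ M) (hMN : M ≤ N)
    (ρ₀ : ℝ × ℝ → ℝ) (hmeas : Measurable ρ₀)
    (hper1 : ∀ y : ℝ × ℝ, ρ₀ (y.1 + 1, y.2) = ρ₀ y)
    (hper2 : ∀ y : ℝ × ℝ, ρ₀ (y.1, y.2 + 1) = ρ₀ y)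
    (hint : IntegrableOn (fun y => (ρ₀ y) ^ 2) (Set.Icc (0 : ℝ) 1 ×ˢ Set.Icc (0 : ℝ) 1)) :
    ∑ i ∈ Finset.range N, ∑ j ∈ Finset.range N, (1 / (N : ℝ)) ^ 2 *
      (∫ y in Set.Icc (0 : ℝ) 1 ×ˢ Set.Icc (0 : ℝ) 1,
        fejerR M ((i : ℝ) / N - y.1) * fejerR M ((j : ℝ) / N - y.2) * ρ₀ y) ^ 2 ≤
      ∫ y in Set.Icc (0 : ℝ) 1 ×ˢ Set.Icc (0 : ℝ) 1, (ρ₀ y) ^ 2 := by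
  set S := Set.Icc (0 : ℝ) 1 ×ˢ Set.Icc (0 : ℝ) 1 with hS
  have hScpt : IsCompact S := isCompact_Icc.prod isCompact_Icc
  have hNpos : (0:ℝ) < N := by
    have : 0 < N := by omega
    exact_mod_cast this
  -- integrability of each weighted term
  have hWρ2 : ∀ x₁ x₂ : ℝ, IntegrableOn
      (fun y : ℝ × ℝ => fejerR M (x₁ - y.1) * fejerR M (x₂ - y.2) * (ρ₀ y) ^ 2) S := by
    intro x₁ x₂
    have hWcont : Continuous fun y : ℝ × ℝ => fejerR M (x₁ - y.1) * fejerR M (x₂ - y.2) :=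
      ((fejer_continuous M).comp (by continuity)).mul
        ((fejer_continuous M).comp (by continuity))
    refine hint.bdd_mul hWcont.aestronglyMeasurable.restrict (c := (M:ℝ)*M) (Filter.Eventually.of_forall fun y => ?_)
    rw [Real.norm_eq_abs, abs_of_nonneg (mul_nonneg (fejer_nonneg _ _) (fejer_nonneg _ _))]
    exact mul_le_mul (fejer_le _ _) (fejer_le _ _) (fejer_nonneg _ _) (Nat.cast_nonneg _)
  -- step 1: bound each summand by Cauchy-Schwarz
  have step1 : ∑ i ∈ Finset.range N, ∑ j ∈ Finset.range N, (1 / (N : ℝ)) ^ 2 *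
      (∫ y in S, fejerR M ((i : ℝ) / N - y.1) * fejerR M ((j : ℝ) / N - y.2) * ρ₀ y) ^ 2
      ≤ ∑ i ∈ Finset.range N, ∑ j ∈ Finset.range N, (1 / (N : ℝ)) ^ 2 *
      (∫ y in S, fejerR M ((i : ℝ) / N - y.1) * fejerR M ((j : ℝ) / N - y.2) * (ρ₀ y)^2) := by
    refine Finset.sum_le_sum fun i _ => Finset.sum_le_sum fun j _ => ?_
    exact mul_le_mul_of_nonneg_left (cs_point M hM ρ₀ hmeas hint _ _) (by positivity)
  -- step 2: the sum of the right-hand sides equals the integral of ρ²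
  have step2 : ∑ i ∈ Finset.range N, ∑ j ∈ Finset.range N, (1 / (N : ℝ)) ^ 2 *
      (∫ y in S, fejerR M ((i : ℝ) / N - y.1) * fejerR M ((j : ℝ) / N - y.2) * (ρ₀ y)^2)
      = ∫ y in S, (ρ₀ y) ^ 2 := by
    have swap : ∑ i ∈ Finset.range N, ∑ j ∈ Finset.range N, (1 / (N : ℝ)) ^ 2 *
        (∫ y in S, fejerR M ((i : ℝ) / N - y.1) * fejerR M ((j : ℝ) / N - y.2) * (ρ₀ y)^2)
        = ∫ y in S, ∑ i ∈ Finset.range N, ∑ j ∈ Finset.range N, (1 / (N : ℝ)) ^ 2 *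
          (fejerR M ((i : ℝ) / N - y.1) * fejerR M ((j : ℝ) / N - y.2) * (ρ₀ y)^2) := by
      have houter : (∫ y in S, ∑ i ∈ Finset.range N, ∑ j ∈ Finset.range N,
            (1 / (N : ℝ)) ^ 2 *
            (fejerR M ((i : ℝ) / N - y.1) * fejerR M ((j : ℝ) / N - y.2) * (ρ₀ y)^2))
          = ∑ i ∈ Finset.range N, ∫ y in S, ∑ j ∈ Finset.range N, (1 / (N : ℝ)) ^ 2 *
            (fejerR M ((i : ℝ) / N - y.1) * fejerR M ((j : ℝ) / N - y.2) * (ρ₀ y)^2) :=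
        MeasureTheory.integral_finset_sum _ (fun i _ =>
          MeasureTheory.integrable_finset_sum _ (fun j _ =>
            ((hWρ2 ((i:ℝ)/N) ((j:ℝ)/N)).const_mul ((1 / (N : ℝ)) ^ 2))))
      rw [houter]
      refine Finset.sum_congr rfl fun i _ => ?_
      have hinner : (∫ y in S, ∑ j ∈ Finset.range N, (1 / (N : ℝ)) ^ 2 *
            (fejerR M ((i : ℝ) / N - y.1) * fejerR M ((j : ℝ) / N - y.2) * (ρ₀ y)^2))
          = ∑ j ∈ Finset.range N, ∫ y in S, (1 / (N : ℝ)) ^ 2 *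
            (fejerR M ((i : ℝ) / N - y.1) * fejerR M ((j : ℝ) / N - y.2) * (ρ₀ y)^2) :=
        MeasureTheory.integral_finset_sum _ (fun j _ =>
          ((hWρ2 ((i:ℝ)/N) ((j:ℝ)/N)).const_mul ((1 / (N : ℝ)) ^ 2)))
      rw [hinner]
      refine Finset.sum_congr rfl fun j _ => ?_
      rw [integral_const_mul]
    rw [swap]
    refine MeasureTheory.setIntegral_congr_fun (measurableSet_Icc.prod measurableSet_Icc)
      fun y _ => ?_
    have h1 := sum_fejer_grid M N hM hMN y.1
    have h2 := sum_fejer_grid M N hM hMN y.2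
    have expand : ∀ i : ℕ, ∑ j ∈ Finset.range N, (1 / (N : ℝ)) ^ 2 *
        (fejerR M ((i : ℝ) / N - y.1) * fejerR M ((j : ℝ) / N - y.2) * (ρ₀ y)^2)
        = (1 / (N : ℝ)) ^ 2 * fejerR M ((i : ℝ) / N - y.1) * (ρ₀ y)^2 * N := by
      intro i
      calc ∑ j ∈ Finset.range N, (1 / (N : ℝ)) ^ 2 *
          (fejerR M ((i : ℝ) / N - y.1) * fejerR M ((j : ℝ) / N - y.2) * (ρ₀ y)^2)
          = ∑ j ∈ Finset.range N, ((1 / (N : ℝ)) ^ 2 * fejerR M ((i : ℝ) / N - y.1) *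
              (ρ₀ y)^2) * fejerR M ((j : ℝ) / N - y.2) :=
            Finset.sum_congr rfl fun j _ => by ring
        _ = ((1 / (N : ℝ)) ^ 2 * fejerR M ((i : ℝ) / N - y.1) * (ρ₀ y)^2) *
              ∑ j ∈ Finset.range N, fejerR M ((j : ℝ) / N - y.2) := by
            rw [Finset.mul_sum]
        _ = _ := by rw [h2]
    calc ∑ i ∈ Finset.range N, ∑ j ∈ Finset.range N, (1 / (N : ℝ)) ^ 2 *
        (fejerR M ((i : ℝ) / N - y.1) * fejerR M ((j : ℝ) / N - y.2) * (ρ₀ y)^2)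
        = ∑ i ∈ Finset.range N, ((1 / (N : ℝ)) ^ 2 * (ρ₀ y)^2 * N) *
            fejerR M ((i : ℝ) / N - y.1) :=
          Finset.sum_congr rfl fun i _ => by rw [expand i]; ring
      _ = ((1 / (N : ℝ)) ^ 2 * (ρ₀ y)^2 * N) *
            ∑ i ∈ Finset.range N, fejerR M ((i : ℝ) / N - y.1) := by rw [Finset.mul_sum]
      _ = (ρ₀ y) ^ 2 := by rw [h1]; field_simp
  calc _ ≤ _ := step1
    _ = _ := step2
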